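/- Let S be a finite set with |S| = κ ≥ 2, α > 1, and m a probability measure on S with maximum value M_⋆ attained on the set S_⋆ ⊆ S of cardinality κ_⋆. Set m_⋆(x) = m(x)/M_⋆ and Z_{N,S} = N^α Σ_{η ∈ E_N} m_⋆^η / a(η). Then Z_{N,S} converges, as N → ∞, to Z_S = κ_⋆ Γ(α)^{κ_⋆ - 1} Π_{y ∉ S_⋆} Γ_y, where Γ_y = Σ_{j≥0} m_⋆(y)^j / a(j) and Γ(α) = Σ_{j≥0} 1/a(j). -/

import Mathlib

noncomputable def aZR (α : ℝ) (n : ℕ) : ℝ := if n = 0 then 1 else (n : ℝ) ^ α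

def confs (S : Type*) [Fintype S] [DecidableEq S] (N : ℕ) : Finset (S → ℕ) :=
  (Fintype.piFinset fun _ => Finset.range (N + 1)).filter (fun η => ∑ x, η x = N)

/-!
Call a nonnegative sequence `f` with sum `F` *power-tailed* with constant `c` if
`n ^ α * f n → c`. For `α ≥ 0` this is stable under convolution: the convolution of `f` and `g`
is power-tailed with constant `c_f G + c_g F`, because a large total `n` is carried by a single
large index (split the convolution at `n / 2`; on each half `n ≤ 2 (n - j)` gives the domination
needed for dominated convergence). The sequence `m⋆(x) ^ n / a(n)` is power-tailed with sum `Γ_x`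
and constant `1` if `x ∈ S⋆`, `0` otherwise, and `Z_N / N ^ α` is the `N`-th term of the
`|S|`-fold convolution of these. Hence `Z_N → ∑_{x ∈ S⋆} ∏_{y ≠ x} Γ_y`, which is the claimed
constant since `Γ_y = Γ(α)` on `S⋆`.
-/

open Filter Finset Topology

structure HasPowerTail (α c F : ℝ) (f : ℕ → ℝ) : Prop where
  nonneg : ∀ n, 0 ≤ f n
  hasSum : HasSum f F
  tendsto : Tendsto (fun n : ℕ => (n : ℝ) ^ α * f n) atTop (𝓝 c)

section Convolution

variable {α : ℝ} {f g : ℕ → ℝ} {cf cg F G : ℝ}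

lemma tendsto_rpow_mul_comp_sub (hg : Tendsto (fun n : ℕ => (n : ℝ) ^ α * g n) atTop (𝓝 cg))
    (j : ℕ) : Tendsto (fun n : ℕ => (n : ℝ) ^ α * g (n - j)) atTop (𝓝 cg) := by
  -- after the shift `n ↦ n + j` the term is `((n + j) / n) ^ α * (n ^ α * g n)`
  rw [← tendsto_add_atTop_iff_nat j]
  have hratio : Tendsto (fun n : ℕ => ((n + j : ℕ) / n : ℝ) ^ α) atTop (𝓝 1) := by
    have h := (tendsto_const_div_atTop_nhds_zero_nat (j : ℝ)).const_add 1
    rw [add_zero] at h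
    have h' := (Real.continuousAt_rpow_const 1 α (Or.inl one_ne_zero)).tendsto.comp h
    rw [Real.one_rpow] at h'
    refine h'.congr' ?_
    filter_upwards [eventually_ne_atTop 0] with n hn
    simp only [Function.comp_apply, Nat.cast_add]
    rw [add_div, div_self (Nat.cast_ne_zero.2 hn)]
  simpa using (hratio.mul hg).congr' <| by
    filter_upwards [eventually_ne_atTop 0] with n hn
    have hn' : (0 : ℝ) < n := Nat.cast_pos.2 (Nat.pos_of_ne_zero hn)
    rw [Real.div_rpow (by positivity) hn'.le]
    push_cast
    field_simp [(Real.rpow_pos_of_pos hn' α).ne']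

lemma rpow_mul_comp_sub_le (hα : 0 ≤ α) (hg0 : ∀ n, 0 ≤ g n) {B : ℝ}
    (hB : ∀ m : ℕ, (m : ℝ) ^ α * g m ≤ B) {n j : ℕ} (hjn : 2 * j ≤ n) :
    (n : ℝ) ^ α * g (n - j) ≤ 2 ^ α * B := by
  have hn : (n : ℝ) ≤ 2 * (n - j : ℕ) := by exact_mod_cast (by omega : n ≤ 2 * (n - j))
  calc (n : ℝ) ^ α * g (n - j) ≤ (2 * (n - j : ℕ) : ℝ) ^ α * g (n - j) := by gcongr; exact hg0 _
    _ = 2 ^ α * (((n - j : ℕ) : ℝ) ^ α * g (n - j)) := by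
        rw [Real.mul_rpow (by norm_num) (by positivity), mul_assoc]
    _ ≤ 2 ^ α * B := by gcongr; exact hB _

lemma tendsto_tsum_ite_mul_rpow_mul_comp_sub (hα : 0 ≤ α) (hf : HasSum f F) (hf0 : ∀ n, 0 ≤ f n)
    (hg0 : ∀ n, 0 ≤ g n) (hg : Tendsto (fun n : ℕ => (n : ℝ) ^ α * g n) atTop (𝓝 cg))
    (P : ℕ → ℕ → Prop) [∀ n j, Decidable (P n j)]
    (hPle : ∀ n j, P n j → 2 * j ≤ n) (hP : ∀ j, ∀ᶠ n in atTop, P n j) :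
    Tendsto (fun n : ℕ => ∑' j, if P n j then f j * ((n : ℝ) ^ α * g (n - j)) else 0)
      atTop (𝓝 (F * cg)) := by
  obtain ⟨B, hB⟩ := hg.bddAbove_range
  replace hB : ∀ m : ℕ, (m : ℝ) ^ α * g m ≤ B := fun m => hB ⟨m, rfl⟩
  have hB0 : 0 ≤ B := (mul_nonneg (Real.rpow_nonneg le_rfl α) (hg0 0)).trans (by simpa using hB 0)
  have hlim : ∀ j, Tendsto (fun n : ℕ => if P n j then f j * ((n : ℝ) ^ α * g (n - j)) else 0)
      atTop (𝓝 (f j * cg)) := fun j =>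
    (tendsto_rpow_mul_comp_sub hg j).const_mul (f j) |>.congr' <| by
      filter_upwards [hP j] with n hn using (if_pos hn).symm
  have hdom : ∀ᶠ n : ℕ in atTop, ∀ j,
      ‖if P n j then f j * ((n : ℝ) ^ α * g (n - j)) else 0‖ ≤ f j * (2 ^ α * B) := by
    refine Eventually.of_forall fun n j => ?_
    split_ifs with h
    · rw [Real.norm_of_nonneg (by have := hf0 j; have := hg0 (n - j); positivity)]
      exact mul_le_mul_of_nonneg_left (rpow_mul_comp_sub_le hα hg0 hB (hPle n j h)) (hf0 j)
    · rw [norm_zero]; have := hf0 j; positivity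
  simpa [(hf.mul_right cg).tsum_eq] using
    tendsto_tsum_of_dominated_convergence (hf.summable.mul_right _) hlim hdom

lemma rpow_mul_sum_antidiagonal_eq (α : ℝ) (f g : ℕ → ℝ) (n : ℕ) :
    (n : ℝ) ^ α * ∑ p ∈ antidiagonal n, f p.1 * g p.2
      = (∑' j, if 2 * j ≤ n then f j * ((n : ℝ) ^ α * g (n - j)) else 0)
        + ∑' k, if 2 * k < n then g k * ((n : ℝ) ^ α * f (n - k)) else 0 := by
  rw [Nat.sum_antidiagonal_eq_sum_range_succ_mk, mul_sum,
    ← sum_filter_add_sum_filter_not (range (n + 1)) (fun j => 2 * j ≤ n)]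
  congr 1
  · rw [tsum_eq_sum (s := (range (n + 1)).filter (fun j => 2 * j ≤ n)) fun j hj =>
      if_neg fun h => hj (mem_filter.2 ⟨mem_range.2 (by omega), h⟩)]
    exact sum_congr rfl fun j hj => by rw [if_pos (mem_filter.1 hj).2]; ring
  · rw [tsum_eq_sum (s := (range (n + 1)).filter (fun k => 2 * k < n)) fun k hk =>
      if_neg fun h => hk (mem_filter.2 ⟨mem_range.2 (by omega), h⟩)]
    refine sum_nbij' (n - ·) (n - ·) ?_ ?_ ?_ ?_ fun j hj => ?_ <;>
      simp only [mem_filter, mem_range, not_le] at * <;> try omega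
    rw [if_pos (by omega), Nat.sub_sub_self (by omega)]
    ring

lemma HasPowerTail.convolution (hα : 0 ≤ α) (hf : HasPowerTail α cf F f)
    (hg : HasPowerTail α cg G g) :
    HasPowerTail α (cf * G + cg * F) (F * G) fun n => ∑ p ∈ antidiagonal n, f p.1 * g p.2 where
  nonneg n := sum_nonneg fun p _ => mul_nonneg (hf.nonneg _) (hg.nonneg _)
  hasSum := by
    have hfn : Summable fun n => ‖f n‖ := hf.hasSum.summable.abs
    have hgn : Summable fun n => ‖g n‖ := hg.hasSum.summable.abs
    have hprod := tsum_mul_tsum_eq_tsum_sum_antidiagonal_of_summable_norm hfn hgn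
    rw [hf.hasSum.tsum_eq, hg.hasSum.tsum_eq] at hprod
    exact hprod ▸ (summable_sum_mul_antidiagonal_of_summable_norm' hfn hf.hasSum.summable
      hgn hg.hasSum.summable).hasSum
  tendsto := by
    have hlow := tendsto_tsum_ite_mul_rpow_mul_comp_sub hα hf.hasSum hf.nonneg hg.nonneg
      hg.tendsto (fun n j => 2 * j ≤ n) (fun _ _ h => h) (fun j => eventually_ge_atTop (2 * j))
    have hhigh := tendsto_tsum_ite_mul_rpow_mul_comp_sub hα hg.hasSum hg.nonneg hf.nonneg
      hf.tendsto (fun n k => 2 * k < n) (fun _ _ h => h.le) (fun k => eventually_gt_atTop (2 * k))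
    rw [add_comm, mul_comm cf, mul_comm cg]
    exact (hlow.add hhigh).congr fun n => (rpow_mul_sum_antidiagonal_eq α f g n).symm

end Convolution

lemma hasPowerTail_ite_zero (α : ℝ) : HasPowerTail α 0 1 fun n => if n = 0 then 1 else 0 where
  nonneg n := by positivity
  hasSum := hasSum_ite_eq 0 1
  tendsto := tendsto_const_nhds.congr' <| by
    filter_upwards [eventually_ne_atTop 0] with n hn
    simp [hn]

lemma sum_piAntidiag_insert_prod {ι : Type*} [DecidableEq ι] {s : Finset ι} {i : ι} (hi : i ∉ s)
    (f : ι → ℕ → ℝ) (N : ℕ) :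
    ∑ η ∈ piAntidiag (insert i s) N, ∏ j ∈ insert i s, f j (η j)
      = ∑ p ∈ antidiagonal N, f i p.1 * ∑ η ∈ piAntidiag s p.2, ∏ j ∈ s, f j (η j) := by
  rw [← cons_eq_insert _ _ hi, piAntidiag_cons, sum_disjiUnion]
  refine sum_congr rfl fun p _ => ?_
  rw [sum_map, mul_sum]
  refine sum_congr rfl fun η hη => ?_
  have hηi : η i = 0 := by_contra fun h => hi ((mem_piAntidiag.1 hη).2 i h)
  rw [prod_cons]
  congr 1
  · simp [hηi]
  · exact prod_congr rfl fun j hj => by simp [ne_of_mem_of_not_mem hj hi]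

lemma hasPowerTail_sum_piAntidiag_prod {ι : Type*} [DecidableEq ι] {α : ℝ} (hα : 0 ≤ α)
    {f : ι → ℕ → ℝ} {c F : ι → ℝ} (hf : ∀ i, HasPowerTail α (c i) (F i) (f i)) (s : Finset ι) :
    HasPowerTail α (∑ i ∈ s, c i * ∏ j ∈ s.erase i, F j) (∏ i ∈ s, F i)
      fun N => ∑ η ∈ piAntidiag s N, ∏ i ∈ s, f i (η i) := by
  induction s using Finset.induction_on with
  | empty => simpa [piAntidiag_empty, apply_ite] using hasPowerTail_ite_zero α
  | insert i s hi ih =>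
    have hconst : ∑ k ∈ insert i s, c k * ∏ j ∈ (insert i s).erase k, F j
        = c i * ∏ j ∈ s, F j + (∑ k ∈ s, c k * ∏ j ∈ s.erase k, F j) * F i := by
      rw [sum_insert hi, erase_insert hi, sum_mul]
      congr 1
      refine sum_congr rfl fun k hk => ?_
      rw [erase_insert_of_ne (ne_of_mem_of_not_mem hk hi).symm, prod_insert (by simp [hi])]
      ring
    rw [hconst, prod_insert hi]
    simpa only [sum_piAntidiag_insert_prod hi] using (hf i).convolution hα ih

lemma aZR_pos (α : ℝ) (n : ℕ) : 0 < aZR α n := by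
  unfold aZR
  split_ifs
  · exact one_pos
  · positivity

lemma summable_one_div_aZR {α : ℝ} (hα : 1 < α) : Summable fun n => 1 / aZR α n := by
  rw [← summable_nat_add_iff 1]
  refine ((summable_nat_add_iff 1).2 (Real.summable_one_div_nat_rpow.2 hα)).congr fun n => ?_
  simp [aZR]

lemma hasPowerTail_pow_div_aZR {α r : ℝ} (hα : 1 < α) (hr0 : 0 ≤ r) (hr1 : r ≤ 1) :
    HasPowerTail α (if r = 1 then 1 else 0) (∑' j, r ^ j / aZR α j) fun n => r ^ n / aZR α n := by
  have hnonneg (n : ℕ) : 0 ≤ r ^ n / aZR α n := by have := aZR_pos α n; positivity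
  refine ⟨hnonneg, (Summable.of_nonneg_of_le hnonneg (fun n => ?_)
    (summable_one_div_aZR hα)).hasSum, ?_⟩
  · have := aZR_pos α n
    gcongr
    exact pow_le_one₀ hr0 hr1
  · have hlim : Tendsto (fun n : ℕ => r ^ n) atTop (𝓝 (if r = 1 then 1 else 0)) := by
      split_ifs with h
      · simp [h]
      · exact tendsto_pow_atTop_nhds_zero_of_lt_one hr0 (lt_of_le_of_ne hr1 h)
    refine hlim.congr' ?_
    filter_upwards [eventually_ne_atTop 0] with n hn
    have : (0 : ℝ) < (n : ℝ) ^ α := by positivity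
    rw [aZR, if_neg hn]
    field_simp

lemma confs_eq_piAntidiag_univ (S : Type*) [Fintype S] [DecidableEq S] (N : ℕ) :
    confs S N = piAntidiag univ N := by
  ext η
  simp only [confs, mem_filter, Fintype.mem_piFinset, mem_range, mem_piAntidiag, mem_univ,
    implies_true, and_true, and_iff_right_iff_imp]
  intro h x
  exact Nat.lt_succ_of_le (h ▸ single_le_sum (fun y _ => Nat.zero_le (η y)) (mem_univ x))

lemma sum_prod_erase_of_subset {ι : Type*} [DecidableEq ι] {s t : Finset ι} (hst : s ⊆ t)
    {Γ : ι → ℝ} {γ : ℝ} (hΓ : ∀ y ∈ s, Γ y = γ) :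
    ∑ x ∈ s, ∏ y ∈ t.erase x, Γ y = s.card * γ ^ (s.card - 1) * ∏ y ∈ t \ s, Γ y := by
  have hx (x) (hx : x ∈ s) : ∏ y ∈ t.erase x, Γ y = γ ^ (s.card - 1) * ∏ y ∈ t \ s, Γ y := by
    rw [← prod_sdiff (erase_subset_erase x hst), ← erase_sdiff_distrib,
      erase_eq_of_notMem (fun h => (mem_sdiff.1 h).2 hx), mul_comm,
      prod_congr rfl fun y hy => hΓ y (mem_of_mem_erase hy), prod_const, card_erase_of_mem hx]
  rw [sum_congr rfl hx, sum_const, nsmul_eq_mul, mul_assoc]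

theorem partition_function_limit_general (S : Type*) [Fintype S] [DecidableEq S]
    (α : ℝ) (hα : 1 < α)
    (m : S → ℝ) (hm : ∀ x, 0 < m x)
    (Mstar : ℝ) (hMstar : IsGreatest (Set.range m) Mstar)
    (Sstar : Finset S) (hSstar : Sstar = Finset.univ.filter (fun x => m x = Mstar))
    (κstar : ℕ) (hκstar : κstar = Sstar.card)
    (mstar : S → ℝ) (hmstar : ∀ x, mstar x = m x / Mstar)
    (Γ : S → ℝ) (hΓ : ∀ y, Γ y = ∑' j : ℕ, mstar y ^ j / aZR α j)
    (Γα : ℝ) (hΓα : Γα = ∑' j : ℕ, 1 / aZR α j)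
    (Z : ℕ → ℝ)
    (hZ : ∀ N, Z N = (N : ℝ) ^ α *
      ∑ η ∈ confs S N, ∏ x, mstar x ^ η x / aZR α (η x)) :
    Filter.Tendsto Z Filter.atTop
      (nhds ((κstar : ℝ) * Γα ^ (κstar - 1) * ∏ y ∈ Finset.univ \ Sstar, Γ y)) := by
  obtain ⟨⟨x₀, rfl⟩, hmax⟩ := hMstar
  have hmstar_nonneg (x : S) : 0 ≤ mstar x := hmstar x ▸ div_nonneg (hm x).le (hm x₀).le
  have hmstar_le_one (x : S) : mstar x ≤ 1 := hmstar x ▸ (div_le_one (hm x₀)).2 (hmax ⟨x, rfl⟩)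
  have hmstar_eq_one (x : S) : mstar x = 1 ↔ x ∈ Sstar := by
    rw [hmstar, div_eq_one_iff_eq (hm x₀).ne', hSstar, mem_filter, and_iff_right (mem_univ x)]
  have hΓ_Sstar (y : S) (hy : y ∈ Sstar) : Γ y = Γα := by
    simp [hΓ, hΓα, (hmstar_eq_one y).2 hy]
  have htail := hasPowerTail_sum_piAntidiag_prod (zero_le_one.trans hα.le)
    (fun x => hasPowerTail_pow_div_aZR hα (hmstar_nonneg x) (hmstar_le_one x)) univ
  simp only [hmstar_eq_one, ite_mul, one_mul, zero_mul, sum_ite_mem, univ_inter, ← hΓ,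
    sum_prod_erase_of_subset (subset_univ Sstar) hΓ_Sstar, ← hκstar] at htail
  rw [funext hZ]
  simpa only [confs_eq_piAntidiag_univ] using htail.tendsto

theorem partition_function_limit (S : Type*) [Fintype S] [DecidableEq S]
    (hκ : 2 ≤ Fintype.card S) (α : ℝ) (hα : 1 < α)
    (m : S → ℝ) (hm : ∀ x, 0 < m x) (hm1 : ∑ x, m x = 1)
    (Mstar : ℝ) (hMstar : IsGreatest (Set.range m) Mstar)
    (Sstar : Finset S) (hSstar : Sstar = Finset.univ.filter (fun x => m x = Mstar))
    (κstar : ℕ) (hκstar : κstar = Sstar.card)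
    (mstar : S → ℝ) (hmstar : ∀ x, mstar x = m x / Mstar)
    (Γ : S → ℝ) (hΓ : ∀ y, Γ y = ∑' j : ℕ, mstar y ^ j / aZR α j)
    (Γα : ℝ) (hΓα : Γα = ∑' j : ℕ, 1 / aZR α j)
    (Z : ℕ → ℝ)
    (hZ : ∀ N, Z N = (N : ℝ) ^ α *
      ∑ η ∈ confs S N, ∏ x, mstar x ^ η x / aZR α (η x)) :
    Filter.Tendsto Z Filter.atTop
      (nhds ((κstar : ℝ) * Γα ^ (κstar - 1) * ∏ y ∈ Finset.univ \ Sstar, Γ y)) :=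
  partition_function_limit_general S α hα m hm Mstar hMstar Sstar hSstar κstar hκstar mstar hmstar Γ
    hΓ Γα hΓα Z hZ
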